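/- arXiv:quant-ph/0004091 — 2 statements merged into one kernel-verified Lean document; each statement's English description precedes it below -/
import Mathlib

section
/- Let σ and w be unit vectors in ℂ^N with ⟨w,σ⟩ = ⟨σ,w⟩ = x for some real 0 < x < 1, and let E > 0 be real. Let H' = E·(|σ⟩⟨σ| + |w⟩⟨w|). Then for every real t, exp(−iH't)·σ = e^{−iEt}·[cos(xEt)·σ − i·sin(xEt)·w]. -/
open scoped InnerProductSpace

/-- The outer product |u⟩⟨v| : the rank-one operator sending φ to ⟨v,φ⟩·u
(inner product conjugate-linear in the first argument). -/
noncomputable def outer {N : ℕ} (u v : EuclideanSpace ℂ (Fin N)) :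
    EuclideanSpace ℂ (Fin N) →L[ℂ] EuclideanSpace ℂ (Fin N) :=
  ContinuousLinearMap.toSpanSingleton ℂ u ∘L (innerSL ℂ v)

/-!
On the span of `σ` and `w` the Hamiltonian `E (|σ⟩⟨σ| + |w⟩⟨w|)` has the eigenvectors `σ ± w`
with eigenvalues `E (1 ± x)`. Writing `σ = ((σ + w) + (σ - w)) / 2`, the evolution multiplies the
two halves by `e^{-iEt} e^{∓ixEt}`, and recombining the phases gives `cos` and `sin`.
-/

theorem NormedSpace.exp_apply_of_apply_eq_smul {𝕂 V : Type*} [RCLike 𝕂] [NormedAddCommGroup V]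
    [NormedSpace 𝕂 V] [CompleteSpace V] {f : V →L[𝕂] V} {v : V} {c : 𝕂} (h : f v = c • v) :
    NormedSpace.exp f v = NormedSpace.exp c • v := by
  have hpow (n : ℕ) : (f ^ n) v = c ^ n • v := by
    induction n with
    | zero => simp
    | succ n ih =>
      rw [pow_succ', mul_apply_eq_comp, ih, map_smul, h, smul_smul, pow_succ]
  have hf := (NormedSpace.exp_series_hasSum_exp' (𝕂 := 𝕂) f).mapL
    (ContinuousLinearMap.apply 𝕂 V v)
  have hc := (NormedSpace.exp_series_hasSum_exp' (𝕂 := 𝕂) c).smul_const v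
  refine hf.unique (hc.congr_fun fun n => ?_)
  simp [hpow, smul_smul]

section
variable {N : ℕ}

lemma outer_apply (u v φ : EuclideanSpace ℂ (Fin N)) : outer u v φ = ⟪v, φ⟫_ℂ • u := rfl

lemma outer_add_outer_apply_add_smul {σ w : EuclideanSpace ℂ (Fin N)} (hσ : ‖σ‖ = 1)
    (hw : ‖w‖ = 1) {x : ℂ} (hwσ : ⟪w, σ⟫_ℂ = x) (hσw : ⟪σ, w⟫_ℂ = x) {s : ℂ} (hs : s ^ 2 = 1) :
    (outer σ σ + outer w w) (σ + s • w) = (1 + s * x) • (σ + s • w) := by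
  have hσσ : ⟪σ, σ⟫_ℂ = 1 := by simp [inner_self_eq_norm_sq_to_K, hσ]
  have hww : ⟪w, w⟫_ℂ = 1 := by simp [inner_self_eq_norm_sq_to_K, hw]
  simp only [add_apply, outer_apply, inner_add_right, inner_smul_right,
    hσσ, hww, hwσ, hσw]
  match_scalars
  · ring
  · linear_combination (-x) * hs

end

theorem stmt_2_general {N : ℕ} (σ w : EuclideanSpace ℂ (Fin N))
    (hσ : ‖σ‖ = 1) (hw : ‖w‖ = 1) (x : ℝ)
    (hwσ : ⟪w, σ⟫_ℂ = (x : ℂ)) (hσw : ⟪σ, w⟫_ℂ = (x : ℂ))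
    (E : ℝ)
    (H' : EuclideanSpace ℂ (Fin N) →L[ℂ] EuclideanSpace ℂ (Fin N))
    (hH' : H' = (E : ℂ) • (outer σ σ + outer w w)) (t : ℝ) :
    NormedSpace.exp ((-(Complex.I * (t : ℂ))) • H') σ =
      Complex.exp (-(Complex.I * (E : ℂ) * (t : ℂ))) •
        (((Real.cos (x * E * t) : ℝ) : ℂ) • σ -
          (Complex.I * ((Real.sin (x * E * t) : ℝ) : ℂ)) • w) := by
  have hexp (s : ℂ) (hs : s ^ 2 = 1) :
      NormedSpace.exp ((-(Complex.I * (t : ℂ))) • H') (σ + s • w) =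
        (Complex.exp (-(Complex.I * E * t)) * (Complex.cos (s * (x * E * t : ℝ)) -
          Complex.sin (s * (x * E * t : ℝ)) * Complex.I)) • (σ + s • w) := by
    rw [Complex.cos_sub_sin_I, ← Complex.exp_add, Complex.exp_eq_exp_ℂ]
    refine NormedSpace.exp_apply_of_apply_eq_smul ?_
    rw [hH', smul_apply, smul_apply,
      outer_add_outer_apply_add_smul hσ hw hwσ hσw hs, smul_smul, smul_smul]
    push_cast
    ring_nf
  calc NormedSpace.exp ((-(Complex.I * (t : ℂ))) • H') σ
      = (2⁻¹ : ℂ) • (NormedSpace.exp ((-(Complex.I * (t : ℂ))) • H') (σ + (1 : ℂ) • w) +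
          NormedSpace.exp ((-(Complex.I * (t : ℂ))) • H') (σ + (-1 : ℂ) • w)) := by
        rw [← map_add, ← map_smul]
        congr 1
        module
    _ = _ := by
        rw [hexp 1 (one_pow 2), hexp (-1) (by norm_num), Complex.ofReal_cos, Complex.ofReal_sin,
          one_mul, neg_one_mul, Complex.cos_neg, Complex.sin_neg]
        match_scalars <;> ring

theorem stmt_2 {N : ℕ} (σ w : EuclideanSpace ℂ (Fin N))
    (hσ : ‖σ‖ = 1) (hw : ‖w‖ = 1) (x : ℝ) (hx0 : 0 < x) (hx1 : x < 1)
    (hwσ : ⟪w, σ⟫_ℂ = (x : ℂ)) (hσw : ⟪σ, w⟫_ℂ = (x : ℂ))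
    (E : ℝ) (hE : 0 < E)
    (H' : EuclideanSpace ℂ (Fin N) →L[ℂ] EuclideanSpace ℂ (Fin N))
    (hH' : H' = (E : ℂ) • (outer σ σ + outer w w)) (t : ℝ) :
    NormedSpace.exp ((-(Complex.I * (t : ℂ))) • H') σ =
      Complex.exp (-(Complex.I * (E : ℂ) * (t : ℂ))) •
        (((Real.cos (x * E * t) : ℝ) : ℂ) • σ -
          (Complex.I * ((Real.sin (x * E * t) : ℝ) : ℂ)) • w) :=
  stmt_2_general σ w hσ hw x hwσ hσw E H' hH' t
end

section
/- There exist constants C > 0 and δ > 0 such that the following holds: for every N, every pair of unit vectors σ, w in ℂ^N with ⟨w,σ⟩ = ⟨σ,w⟩ = x for some real x with 0 < x < δ, letting H = 2ix·(|w⟩⟨σ| − |σ⟩⟨w|) and t₀ = (π − 2·arccos x)/(2x·√(1 − x²)), one has ‖exp(−iHt₀) − exp(−iH)‖ ≤ C·x³ in operator norm. -/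
/-!
Write `a = -iH`. Since `a` commutes with itself,
`exp(-iHt₀) - exp(-iH) = exp a * (exp((t₀ - 1) • a) - 1)`, whose norm is at most
`|t₀ - 1| ‖a‖ exp(‖a‖ + |t₀ - 1| ‖a‖)`. For unit vectors `‖a‖ ≤ 4x`, and
`t₀ = arcsin x / (x √(1 - x²))` lies between `1` and `1 / (1 - x²)`, so `|t₀ - 1| = O(x²)`.
-/

open scoped InnerProductSpace

namespace Real

theorem exp_sub_one_le_mul_exp (x : ℝ) : exp x - 1 ≤ x * exp x := by
  have h := mul_le_mul_of_nonneg_left (one_sub_le_exp_neg x) (exp_pos x).le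
  rw [← exp_add, add_neg_cancel, exp_zero] at h
  linarith

theorem arctan_le_self {y : ℝ} (hy : 0 ≤ y) : arctan y ≤ y := by
  have h := le_tan (arctan_nonneg.mpr hy) (arctan_lt_pi_div_two y)
  rwa [tan_arctan] at h

theorem self_le_arcsin {x : ℝ} (hx₀ : 0 ≤ x) (hx₁ : x ≤ 1) : x ≤ arcsin x := by
  simpa only [sin_arcsin (by linarith) hx₁] using sin_le (arcsin_nonneg.mpr hx₀)

theorem arcsin_le_div_sqrt {x : ℝ} (hx₀ : 0 ≤ x) (hx₁ : x < 1) :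
    arcsin x ≤ x / √(1 - x ^ 2) := by
  rw [arcsin_eq_arctan ⟨by linarith, hx₁⟩]
  exact arctan_le_self (by positivity)

theorem pi_sub_two_mul_arccos (x : ℝ) : π - 2 * arccos x = 2 * arcsin x := by
  rw [arccos_eq_pi_div_two_sub_arcsin]
  ring

theorem abs_pi_sub_two_mul_arccos_div_sub_one_le {x : ℝ} (hx₀ : 0 < x) (hx₁ : x ≤ 1 / 2) :
    |(π - 2 * arccos x) / (2 * x * √(1 - x ^ 2)) - 1| ≤ 2 * x ^ 2 := by
  have hx₁' : x < 1 := by linarith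
  have hpos : 0 < 1 - x ^ 2 := by nlinarith
  set s := √(1 - x ^ 2)
  have hs : 0 < s := sqrt_pos.mpr hpos
  have hs_sq : s ^ 2 = 1 - x ^ 2 := sq_sqrt hpos.le
  rw [pi_sub_two_mul_arccos, mul_assoc, mul_div_mul_left _ _ two_ne_zero, abs_le]
  constructor
  · have hxs : x * s ≤ arcsin x := by nlinarith [self_le_arcsin hx₀.le hx₁'.le]
    have hlower : 1 ≤ arcsin x / (x * s) := (one_le_div (by positivity)).mpr hxs
    linarith [sq_nonneg x]
  · have hupper : arcsin x / (x * s) ≤ 1 / (1 - x ^ 2) := by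
      calc arcsin x / (x * s) ≤ x / s / (x * s) := by gcongr; exact arcsin_le_div_sqrt hx₀.le hx₁'
        _ = 1 / (1 - x ^ 2) := by rw [← hs_sq]; field_simp
    have hinv : 1 / (1 - x ^ 2) ≤ 1 + 2 * x ^ 2 := by
      rw [div_le_iff₀ hpos]
      nlinarith [mul_nonneg (sq_nonneg x) (by nlinarith : 0 ≤ 1 - 2 * x ^ 2)]
    linarith

end Real

namespace NormedSpace

open scoped Nat

variable {𝔸 : Type*} [NormedRing 𝔸] [CompleteSpace 𝔸]

theorem norm_exp_sub_one_le [NormedAlgebra ℚ 𝔸] (a : 𝔸) : ‖exp a - 1‖ ≤ Real.exp ‖a‖ - 1 := by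
  have hterm : ∀ n : ℕ, ‖((n + 1)! ⁻¹ : ℚ) • a ^ (n + 1)‖ ≤ ‖a‖ ^ (n + 1) / (n + 1)! := by
    intro n
    rw [norm_smul, norm_inv, ← Rat.norm_cast_real, Rat.cast_natCast, RCLike.norm_natCast,
      inv_mul_eq_div]
    gcongr
    exact norm_pow_le' a n.succ_pos
  have hexp : exp a - 1 = ∑' n : ℕ, ((n + 1)! ⁻¹ : ℚ) • a ^ (n + 1) := by
    rw [congrFun (exp_eq_tsum ℚ) a, (expSeries_summable' (𝕂 := ℚ) a).tsum_eq_zero_add]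
    simp
  have hexp_real : Real.exp ‖a‖ - 1 = ∑' n : ℕ, ‖a‖ ^ (n + 1) / (n + 1)! := by
    rw [Real.exp_eq_exp_ℝ, congrFun exp_eq_tsum_div,
      (Real.summable_pow_div_factorial _).tsum_eq_zero_add]
    simp
  rw [hexp, hexp_real]
  exact tsum_of_norm_bounded
    ((summable_nat_add_iff 1).mpr (Real.summable_pow_div_factorial ‖a‖)).hasSum hterm

theorem norm_exp_le [NormedAlgebra ℚ 𝔸] [NormOneClass 𝔸] (a : 𝔸) : ‖exp a‖ ≤ Real.exp ‖a‖ := by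
  calc ‖exp a‖ ≤ ‖exp a - 1‖ + ‖(1 : 𝔸)‖ := norm_le_norm_sub_add _ _
    _ ≤ Real.exp ‖a‖ := by linarith [norm_exp_sub_one_le a, norm_one (α := 𝔸)]

theorem norm_exp_smul_sub_exp_le {𝕂 : Type*} [RCLike 𝕂] [NormedAlgebra 𝕂 𝔸] [NormOneClass 𝔸]
    (t : 𝕂) (a : 𝔸) :
    ‖exp (t • a) - exp a‖ ≤ ‖t - 1‖ * ‖a‖ * Real.exp (‖a‖ + ‖t - 1‖ * ‖a‖) := by
  let : NormedAlgebra ℚ 𝔸 := NormedAlgebra.restrictScalars ℚ 𝕂 𝔸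
  have hsplit : exp (t • a) = exp a * exp ((t - 1) • a) := by
    rw [← exp_add_of_commute ((Commute.refl a).smul_right _), sub_smul, one_smul,
      add_sub_cancel]
  calc ‖exp (t • a) - exp a‖ = ‖exp a * (exp ((t - 1) • a) - 1)‖ := by
        rw [hsplit, mul_sub, mul_one]
    _ ≤ ‖exp a‖ * ‖exp ((t - 1) • a) - 1‖ := norm_mul_le _ _
    _ ≤ Real.exp ‖a‖ * (Real.exp ‖(t - 1) • a‖ - 1) := by
        gcongr
        exacts [norm_exp_le a, norm_exp_sub_one_le _]
    _ ≤ Real.exp ‖a‖ * (‖(t - 1) • a‖ * Real.exp ‖(t - 1) • a‖) := by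
        gcongr
        exact Real.exp_sub_one_le_mul_exp _
    _ = ‖t - 1‖ * ‖a‖ * Real.exp (‖a‖ + ‖t - 1‖ * ‖a‖) := by
        rw [norm_smul, Real.exp_add]
        ring

end NormedSpace

theorem norm_outer_le {N : ℕ} (u v : EuclideanSpace ℂ (Fin N)) : ‖outer u v‖ ≤ ‖u‖ * ‖v‖ := by
  refine (ContinuousLinearMap.opNorm_comp_le _ _).trans ?_
  rw [ContinuousLinearMap.norm_toSpanSingleton, innerSL_apply_norm]

theorem norm_outer_sub_outer_swap_le {N : ℕ} (u v : EuclideanSpace ℂ (Fin N)) :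
    ‖outer u v - outer v u‖ ≤ 2 * (‖u‖ * ‖v‖) := by
  calc ‖outer u v - outer v u‖ ≤ ‖outer u v‖ + ‖outer v u‖ := norm_sub_le _ _
    _ ≤ ‖u‖ * ‖v‖ + ‖v‖ * ‖u‖ := add_le_add (norm_outer_le u v) (norm_outer_le v u)
    _ = 2 * (‖u‖ * ‖v‖) := by ring

theorem stmt_17 :
    ∃ C > (0 : ℝ), ∃ δ > (0 : ℝ), ∀ (N : ℕ) (σ w : EuclideanSpace ℂ (Fin N)) (x : ℝ),
      ‖σ‖ = 1 → ‖w‖ = 1 → 0 < x → x < δ →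
      ⟪w, σ⟫_ℂ = (x : ℂ) → ⟪σ, w⟫_ℂ = (x : ℂ) →
      ∀ H : EuclideanSpace ℂ (Fin N) →L[ℂ] EuclideanSpace ℂ (Fin N),
        H = (2 * Complex.I * (x : ℂ)) • (outer w σ - outer σ w) →
      ∀ t₀ : ℝ, t₀ = (Real.pi - 2 * Real.arccos x) / (2 * x * Real.sqrt (1 - x ^ 2)) →
      ‖NormedSpace.exp ((-(Complex.I * (t₀ : ℂ))) • H)
          - NormedSpace.exp ((-Complex.I) • H)‖ ≤ C * x ^ 3 := by
  refine ⟨8 * Real.exp 3, by positivity, 1 / 2, by norm_num, ?_⟩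
  intro N σ w x hσ hw hx hxδ _ _ H hH t₀ ht₀
  -- makes the operator algebra a `NormOneClass`
  have : Nontrivial (EuclideanSpace ℂ (Fin N)) := ⟨σ, 0, by rintro rfl; simp at hσ⟩
  set a := (-Complex.I) • H with ha_def
  have ha : ‖a‖ ≤ 4 * x := by
    calc ‖a‖ = 2 * x * ‖outer w σ - outer σ w‖ := by
          simp [ha_def, hH, norm_smul, abs_of_pos hx, mul_assoc]
      _ ≤ 2 * x * (2 * (‖w‖ * ‖σ‖)) := by gcongr; exact norm_outer_sub_outer_swap_le w σ
      _ = 4 * x := by rw [hw, hσ]; ring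
  have ht : ‖(t₀ : ℂ) - 1‖ ≤ 2 * x ^ 2 := by
    rw [← Complex.ofReal_one, ← Complex.ofReal_sub, Complex.norm_real, Real.norm_eq_abs, ht₀]
    exact Real.abs_pi_sub_two_mul_arccos_div_sub_one_le hx hxδ.le
  have hexponent : ‖a‖ + ‖(t₀ : ℂ) - 1‖ * ‖a‖ ≤ 3 := by
    nlinarith [norm_nonneg a, norm_nonneg ((t₀ : ℂ) - 1)]
  rw [show (-(Complex.I * t₀)) • H = (t₀ : ℂ) • a by rw [ha_def, smul_smul]; ring_nf]
  calc _ ≤ ‖(t₀ : ℂ) - 1‖ * ‖a‖ * Real.exp (‖a‖ + ‖(t₀ : ℂ) - 1‖ * ‖a‖) :=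
        NormedSpace.norm_exp_smul_sub_exp_le _ _
    _ ≤ 2 * x ^ 2 * (4 * x) * Real.exp 3 := by gcongr
    _ = 8 * Real.exp 3 * x ^ 3 := by ring
end
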